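/- arXiv:1308.2091 — 3 statements merged into one kernel-verified Lean document; each statement's English description precedes it below -/
import Mathlib

section
/- The supremum of |D(p)|/H(p)^2 over all integer quadratic polynomials p equals 5, and it is attained by the polynomial Q(x² + x − 1) for any positive integer Q, i.e. for p(x) = Qx² + Qx − Q one has |D(p)| = 5Q² = 5·H(p)². -/
/-! The triangle inequality gives `|b² - 4ac| ≤ |b|² + 4|a||c| ≤ H² + 4H² = 5H²`, and
`Q(x² + x - 1)` has discriminant `Q² + 4Q² = 5Q²` with height `Q`, so the bound is sharp. -/

theorem abs_discrim_le_five_mul_sq {R : Type*} [CommRing R] [LinearOrder R]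
    [IsStrictOrderedRing R] (a b c : R) :
    |discrim a b c| ≤ 5 * max |a| (max |b| |c|) ^ 2 := by
  set H := max |a| (max |b| |c|)
  have ha : |a| ≤ H := le_max_left _ _
  have hb : |b| ≤ H := (le_max_left _ _).trans (le_max_right _ _)
  have hc : |c| ≤ H := (le_max_right _ _).trans (le_max_right _ _)
  calc |discrim a b c| ≤ |b ^ 2| + |4 * a * c| := abs_sub _ _
    _ = |b| ^ 2 + 4 * (|a| * |c|) := by simp only [abs_pow, abs_mul, Nat.abs_ofNat, mul_assoc]
    _ ≤ H ^ 2 + 4 * (H * H) := by gcongr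
    _ = 5 * H ^ 2 := by ring

theorem discrim_self_self_neg {R : Type*} [CommRing R] (Q : R) :
    discrim Q Q (-Q) = 5 * Q ^ 2 := by
  rw [discrim]
  ring

theorem stmt_1 :
    (∀ a b c : ℤ, a ≠ 0 →
      ((|b ^ 2 - 4 * a * c| : ℤ) : ℝ) ≤ 5 * ((max |a| (max |b| |c|) : ℤ) : ℝ) ^ 2) ∧
    (∀ Q : ℤ, 0 < Q →
      |Q ^ 2 - 4 * Q * (-Q)| = 5 * Q ^ 2 ∧ max |Q| (max |Q| |(-Q)|) = Q) := by
  refine ⟨fun a b c _ => ?_, fun Q hQ => ⟨?_, ?_⟩⟩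
  · exact_mod_cast abs_discrim_le_five_mul_sq a b c
  · rw [← discrim, discrim_self_self_neg, abs_of_nonneg (by positivity)]
  · simp [abs_of_pos hQ]
end

section
/- Let α = a/q + θ/q² with gcd(a,q) = 1, q ≥ 1 an integer, and |θ| ≤ 1. Then for any real β, any U > 0, and any integer P ≥ 1, the sum over x from 1 to P of min(U, 1/‖αx + β‖) is at most 6(P/q + 1)(U + q·ln q), where ‖t‖ denotes the distance from t to the nearest integer. -/
/-!
Model `‖t‖` as the norm of `t` in `UnitAddCircle = ℝ ⧸ ℤ`. Cut `1, …, P` into at most `P / q + 1`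
windows of `q` consecutive integers. On the window starting at `M`, write `x = M + y` with
`0 ≤ y < q`, so that `α x + β = γ + a y / q + θ y / q²` with `γ = α M + β` and `|θ y / q²| ≤ 1 / q`.
Modulo `1`, `γ + a y / q = (c + k_y) / q` with `c ∈ [0, 1)`, and `y ↦ k_y ∈ {0, …, q - 1}` is
injective because `gcd (a, q) = 1`. Hence `q ‖α x + β‖ ≥ min (k_y, q - 1 - k_y) - 1`, and summing
`U` or `q / (m - 1)` over the at most two `k` with `min (k, q - 1 - k) = m` gives
`4 U + 2 q H_{q-1} ≤ 6 (U + q log q)` per window.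
-/

open Finset

noncomputable def blockResidue (a : ℤ) (q : ℕ) (γ : ℝ) (y : ℤ) : ℕ :=
  ((a * y + ⌊q * γ⌋ : ℤ) : ZMod q).val

namespace UnitAddCircle

lemma coe_add_intCast (x : ℝ) (n : ℤ) : ((x + n : ℝ) : UnitAddCircle) = x := by
  rw [← AddCircle.coe_fract, Int.fract_add_intCast, AddCircle.coe_fract]

lemma norm_coe_eq_min_fract (x : ℝ) :
    ‖(x : UnitAddCircle)‖ = min (Int.fract x) (1 - Int.fract x) := by
  rw [norm_eq, abs_sub_round_eq_min]

lemma norm_coe_le_abs (x : ℝ) : ‖(x : UnitAddCircle)‖ ≤ |x| := by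
  simpa [norm_eq] using round_le x 0

lemma norm_coe_sub_abs_le (x δ : ℝ) :
    ‖(x : UnitAddCircle)‖ - |δ| ≤ ‖((x + δ : ℝ) : UnitAddCircle)‖ := by
  have h := norm_sub_le ((x + δ : ℝ) : UnitAddCircle) δ
  rw [← AddCircle.coe_sub, add_sub_cancel_right] at h
  linarith [norm_coe_le_abs δ]

lemma min_div_le_norm_coe_div {q k : ℕ} (hk : k < q) {c : ℝ} (hc₀ : 0 ≤ c) (hc₁ : c < 1) :
    (min k (q - 1 - k) : ℕ) / (q : ℝ) ≤ ‖(((c + k) / q : ℝ) : UnitAddCircle)‖ := by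
  have hq : (0 : ℝ) < q := by exact_mod_cast (Nat.zero_le k).trans_lt hk
  have hkq : (k : ℝ) + 1 ≤ q := by exact_mod_cast hk
  rw [norm_coe_eq_min_fract, Int.fract_eq_self.2 ⟨by positivity, by rw [div_lt_one hq]; linarith⟩,
    Nat.cast_min, Nat.cast_sub (by omega : k ≤ q - 1), Nat.cast_sub (by omega : 1 ≤ q),
    Nat.cast_one, ← min_div_div_right hq.le]
  refine min_le_min (by gcongr; linarith) ?_
  rw [one_sub_div hq.ne']
  exact div_le_div_of_nonneg_right (by linarith) hq.le

lemma coe_add_mul_div_eq_coe_fract_add_blockResidue_div (a : ℤ) (q : ℕ) [NeZero q] (γ : ℝ)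
    (y : ℤ) :
    ((γ + ((a * y : ℤ) : ℝ) / q : ℝ) : UnitAddCircle) =
      (((Int.fract (q * γ) + blockResidue a q γ y) / q : ℝ) : UnitAddCircle) := by
  set m : ℤ := ⌊q * γ⌋
  set n : ℤ := a * y + m
  have hq : (q : ℝ) ≠ 0 := Nat.cast_ne_zero.2 (NeZero.ne q)
  have hval : ((blockResidue a q γ y : ℕ) : ℝ) = ((n % q : ℤ) : ℝ) := by
    exact_mod_cast ZMod.val_intCast n
  have hdiv : ((n % q : ℤ) : ℝ) + q * ((n / q : ℤ) : ℝ) = ((a * y : ℤ) : ℝ) + m := by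
    exact_mod_cast Int.emod_add_mul_ediv n q
  have hfract : Int.fract (q * γ) = q * γ - m := rfl
  have hsplit : γ + ((a * y : ℤ) : ℝ) / q =
      (Int.fract (q * γ) + ((n % q : ℤ) : ℝ)) / q + ((n / q : ℤ) : ℝ) := by
    rw [hfract]
    field_simp
    linarith
  rw [hval, hsplit, coe_add_intCast]

end UnitAddCircle

lemma injOn_intCast_mul_add {a : ℤ} {q : ℕ} (ha : IsCoprime a q) (m : ℤ) :
    Set.InjOn (fun y : ℤ => ((a * y + m : ℤ) : ZMod q)) (Set.Ico 0 q) := by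
  intro y₁ hy₁ y₂ hy₂ h
  simp only [Set.mem_Ico] at hy₁ hy₂
  have hdvd : (q : ℤ) ∣ a * (y₂ - y₁) := by
    rw [ZMod.intCast_eq_intCast_iff_dvd_sub] at h
    convert h using 1; ring
  have := Int.eq_zero_of_dvd_of_natAbs_lt_natAbs (ha.symm.dvd_of_dvd_mul_left hdvd) (by omega)
  omega

lemma sum_comp_le_sum_of_injOn {ι κ : Type*} {s : Finset ι} {t : Finset κ} {g : ι → κ}
    (hg : Set.InjOn g s) (hst : ∀ i ∈ s, g i ∈ t) {f : κ → ℝ} (hf : ∀ j ∈ t, 0 ≤ f j) :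
    ∑ i ∈ s, f (g i) ≤ ∑ j ∈ t, f j := by
  classical
  rw [← sum_image hg]
  exact sum_le_sum_of_subset_of_nonneg (image_subset_iff.2 hst) fun j hj _ => hf j hj

lemma sum_range_apply_min_reflect_le {f : ℕ → ℝ} (hf : ∀ m, 0 ≤ f m) (q : ℕ) :
    ∑ k ∈ range q, f (min k (q - 1 - k)) ≤ 2 * ∑ k ∈ range q, f k := by
  calc ∑ k ∈ range q, f (min k (q - 1 - k))
      ≤ ∑ k ∈ range q, (f k + f (q - 1 - k)) := by
        refine sum_le_sum fun k _ => ?_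
        rcases min_choice k (q - 1 - k) with h | h <;> rw [h] <;> linarith [hf k, hf (q - 1 - k)]
    _ = 2 * ∑ k ∈ range q, f k := by rw [sum_add_distrib, sum_range_reflect, two_mul]

lemma sum_Ico_le_mul_of_sum_Ico_le {f : ℤ → ℝ} {q : ℤ} (hq : 0 ≤ q) {B : ℝ}
    (hB : ∀ M, ∑ x ∈ Ico M (M + q), f x ≤ B) (N : ℤ) (J : ℕ) :
    ∑ x ∈ Ico N (N + J * q), f x ≤ J * B := by
  induction J with
  | zero => simp
  | succ J ih =>
    have hJ : N ≤ N + J * q := le_add_of_nonneg_right (by positivity)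
    calc ∑ x ∈ Ico N (N + (J + 1 : ℕ) * q), f x
        = ∑ x ∈ Ico N (N + J * q), f x + ∑ x ∈ Ico (N + J * q) (N + J * q + q), f x := by
          rw [← sum_union (Ico_disjoint_Ico_consecutive _ _ _), Ico_union_Ico_eq_Ico hJ (by omega)]
          push_cast; ring_nf
      _ ≤ J * B + B := add_le_add ih (hB _)
      _ = (J + 1 : ℕ) * B := by push_cast; ring

lemma sum_Icc_le_of_sum_Ico_le {f : ℤ → ℝ} (hf : ∀ x, 0 ≤ f x) {q : ℕ} (hq : 0 < q) {B : ℝ}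
    (hB : ∀ M : ℤ, ∑ x ∈ Ico M (M + q), f x ≤ B) {P : ℤ} (hP : 0 ≤ P) :
    ∑ x ∈ Icc 1 P, f x ≤ (P / q + 1) * B := by
  have hq' : (0 : ℝ) < q := by exact_mod_cast hq
  have hB₀ : 0 ≤ B := (sum_nonneg fun x _ => hf x).trans (hB 0)
  have hPq : (0 : ℝ) ≤ P / q := div_nonneg (by exact_mod_cast hP) hq'.le
  obtain ⟨J, hJ⟩ : ∃ J : ℕ, J = ⌊(P : ℝ) / q⌋₊ + 1 := ⟨_, rfl⟩
  have hJP : (J : ℝ) ≤ P / q + 1 := by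
    rw [hJ]; push_cast; linarith [Nat.floor_le hPq]
  have hPJ : P < (J : ℤ) * q := by
    have h : (P : ℝ) < J * q := by
      rw [← div_lt_iff₀ hq', hJ]; push_cast; exact Nat.lt_floor_add_one _
    exact_mod_cast h
  calc ∑ x ∈ Icc 1 P, f x ≤ ∑ x ∈ Ico (1 : ℤ) (1 + J * q), f x :=
        sum_le_sum_of_subset_of_nonneg (fun x hx => by simp only [mem_Icc, mem_Ico] at hx ⊢; omega)
          fun x _ _ => hf x
    _ ≤ J * B := sum_Ico_le_mul_of_sum_Ico_le (by positivity) hB 1 J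
    _ ≤ (P / q + 1) * B := by gcongr

noncomputable def minInvBound (U Q : ℝ) (m : ℕ) : ℝ := if m < 2 then U else Q / (m - 1)

lemma minInvBound_nonneg {U Q : ℝ} (hU : 0 ≤ U) (hQ : 0 ≤ Q) (m : ℕ) :
    0 ≤ minInvBound U Q m := by
  unfold minInvBound
  split_ifs with h
  · exact hU
  · have : (1 : ℝ) < m := by exact_mod_cast (not_lt.1 h)
    exact div_nonneg hQ (by linarith)

lemma min_inv_le_minInvBound {U Q d : ℝ} (hQ : 0 < Q) {m : ℕ} (hd : (m - 1) / Q ≤ d) :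
    min U d⁻¹ ≤ minInvBound U Q m := by
  unfold minInvBound
  split_ifs with h
  · exact min_le_left _ _
  · have hm : (0 : ℝ) < m - 1 := by
      have : (2 : ℝ) ≤ m := by exact_mod_cast (not_lt.1 h)
      linarith
    calc min U d⁻¹ ≤ d⁻¹ := min_le_right _ _
      _ ≤ ((m - 1) / Q)⁻¹ := inv_anti₀ (by positivity) hd
      _ = Q / (m - 1) := inv_div _ _

lemma sum_range_minInvBound_le {U Q : ℝ} (hU : 0 ≤ U) (hQ : 0 ≤ Q) {q : ℕ} (hq : 0 < q) :
    ∑ m ∈ range q, minInvBound U Q m ≤ 2 * U + Q * harmonic (q - 1) := by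
  obtain ⟨n, rfl⟩ : ∃ n, q = n + 1 := ⟨q - 1, by omega⟩
  have hshift (m : ℕ) : minInvBound U Q (m + 1 + 1) = Q * ((m + 1 : ℕ) : ℝ)⁻¹ := by
    rw [minInvBound, if_neg (by omega)]; push_cast; ring
  calc ∑ m ∈ range (n + 1), minInvBound U Q m ≤ ∑ m ∈ range (n + 2), minInvBound U Q m :=
        sum_le_sum_of_subset_of_nonneg (range_subset_range.2 (by omega))
          fun m _ _ => minInvBound_nonneg hU hQ m
    _ = 2 * U + Q * harmonic n := by
        rw [sum_range_succ', sum_range_succ', sum_congr rfl fun m _ => hshift m, ← mul_sum]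
        simp only [harmonic, minInvBound]
        push_cast
        ring

lemma two_mul_two_mul_add_mul_harmonic_le {U : ℝ} (hU : 0 ≤ U) {q : ℕ} (hq : 0 < q) :
    2 * (2 * U + q * harmonic (q - 1)) ≤ 6 * (U + q * Real.log q) := by
  obtain ⟨n, rfl⟩ : ∃ n, q = n + 1 := ⟨q - 1, by omega⟩
  rcases Nat.eq_zero_or_pos n with rfl | hn
  · norm_num; linarith
  have hn' : (1 : ℝ) ≤ n := by exact_mod_cast hn
  have hlog_mono : Real.log n ≤ Real.log (n + 1 : ℕ) :=
    Real.log_le_log (by positivity) (by push_cast; linarith)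
  have hlog_two : Real.log 2 ≤ Real.log (n + 1 : ℕ) :=
    Real.log_le_log (by norm_num) (by push_cast; linarith)
  have hH := harmonic_le_one_add_log n
  have := Real.log_two_gt_d9
  rw [add_tsub_cancel_right]
  nlinarith

section Window

variable {a : ℤ} {q : ℕ} [NeZero q]

lemma sub_one_div_le_norm_coe {θ : ℝ} (hθ : |θ| ≤ 1) (γ : ℝ) {y : ℤ} (hy : y ∈ Ico (0 : ℤ) q) :
    ((min (blockResidue a q γ y) (q - 1 - blockResidue a q γ y) : ℕ) - 1) / (q : ℝ) ≤
      ‖((γ + (a / q + θ / q ^ 2) * y : ℝ) : UnitAddCircle)‖ := by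
  set k := blockResidue a q γ y
  rw [mem_Ico] at hy
  have hq : (0 : ℝ) < q := by exact_mod_cast Nat.pos_of_neZero q
  have hy₀ : (0 : ℝ) ≤ y := by exact_mod_cast hy.1
  have hyq : (y : ℝ) ≤ q := by exact_mod_cast hy.2.le
  have hδ : |θ * y / q ^ 2| ≤ 1 / q := by
    rw [abs_div, abs_mul, abs_of_nonneg hy₀, abs_of_pos (pow_pos hq 2),
      div_le_div_iff₀ (pow_pos hq 2) hq]
    nlinarith [mul_le_mul hθ hyq hy₀ zero_le_one]
  have hsplit : γ + (a / q + θ / q ^ 2) * y = (γ + ((a * y : ℤ) : ℝ) / q) + θ * y / q ^ 2 := by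
    push_cast; ring
  calc ((min k (q - 1 - k) : ℕ) - 1) / (q : ℝ)
      = (min k (q - 1 - k) : ℕ) / (q : ℝ) - 1 / q := sub_div _ _ _
    _ ≤ ‖(((Int.fract (q * γ) + k) / q : ℝ) : UnitAddCircle)‖ - |θ * y / q ^ 2| :=
        sub_le_sub (UnitAddCircle.min_div_le_norm_coe_div (ZMod.val_lt _) (Int.fract_nonneg _)
          (Int.fract_lt_one _)) hδ
    _ = ‖((γ + ((a * y : ℤ) : ℝ) / q : ℝ) : UnitAddCircle)‖ - |θ * y / q ^ 2| := by
        rw [UnitAddCircle.coe_add_mul_div_eq_coe_fract_add_blockResidue_div]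
    _ ≤ _ := by rw [hsplit]; exact UnitAddCircle.norm_coe_sub_abs_le _ _

lemma injOn_blockResidue (ha : IsCoprime a q) (γ : ℝ) :
    Set.InjOn (blockResidue a q γ) (Ico (0 : ℤ) q) := by
  rw [coe_Ico]
  exact ZMod.val_injective _ |>.comp_injOn (injOn_intCast_mul_add ha _)

theorem sum_Ico_min_inv_norm_coe_le (ha : IsCoprime a q) {θ : ℝ} (hθ : |θ| ≤ 1) {U : ℝ}
    (hU : 0 < U) (γ : ℝ) :
    ∑ y ∈ Ico (0 : ℤ) q, min U ‖((γ + (a / q + θ / q ^ 2) * y : ℝ) : UnitAddCircle)‖⁻¹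
      ≤ 6 * (U + q * Real.log q) := by
  have hq₀ : 0 < q := Nat.pos_of_neZero q
  have hq : (0 : ℝ) < q := by exact_mod_cast hq₀
  have hF := minInvBound_nonneg hU.le hq.le
  let G : ℕ → ℝ := fun j => minInvBound U q (min j (q - 1 - j))
  calc _ ≤ ∑ y ∈ Ico (0 : ℤ) q, G (blockResidue a q γ y) :=
        sum_le_sum fun y hy => min_inv_le_minInvBound hq (sub_one_div_le_norm_coe hθ γ hy)
    _ ≤ ∑ j ∈ range q, G j :=
        sum_comp_le_sum_of_injOn (injOn_blockResidue ha γ)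
          (fun y _ => mem_range.2 (ZMod.val_lt _)) fun j _ => hF _
    _ ≤ 2 * ∑ j ∈ range q, minInvBound U q j := sum_range_apply_min_reflect_le hF q
    _ ≤ 2 * (2 * U + q * harmonic (q - 1)) := by
        gcongr; exact sum_range_minInvBound_le hU.le hq.le hq₀
    _ ≤ 6 * (U + q * Real.log q) := two_mul_two_mul_add_mul_harmonic_le hU.le hq₀

end Window

theorem stmt_2 (a q : ℤ) (hq : 1 ≤ q) (hgcd : Int.gcd a q = 1)
    (θ : ℝ) (hθ : |θ| ≤ 1) (α : ℝ) (hα : α = (a : ℝ) / q + θ / (q : ℝ) ^ 2)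
    (β : ℝ) (U : ℝ) (hU : 0 < U) (P : ℤ) (hP : 1 ≤ P) :
    ∑ x ∈ Finset.Icc 1 P,
        min U (min (Int.fract (α * x + β)) (1 - Int.fract (α * x + β)))⁻¹
      ≤ 6 * ((P : ℝ) / q + 1) * (U + q * Real.log q) := by
  lift q to ℕ using (by omega)
  have : NeZero q := ⟨by omega⟩
  have ha : IsCoprime a q := Int.isCoprime_iff_gcd_eq_one.2 hgcd
  simp only [← UnitAddCircle.norm_coe_eq_min_fract, Int.cast_natCast]
  rw [mul_assoc, mul_left_comm]
  refine sum_Icc_le_of_sum_Ico_le (fun x => le_min hU.le (inv_nonneg.2 (norm_nonneg _)))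
    (Nat.pos_of_neZero q) (fun M => ?_) (by omega)
  rw [show Ico M (M + q) = Ico (0 + M) (q + M) by rw [zero_add, add_comm], ← sum_Ico_add']
  refine (sum_congr rfl fun y _ => ?_).trans_le
    (sum_Ico_min_inv_norm_coe_le ha hθ hU (α * M + β))
  rw [hα]; push_cast; ring_nf
end

section
/- There exists an absolute constant m₀ such that for all integers m > m₀, all integers a with gcd(a,m) = 1, and all integers N with 1 ≤ N ≤ m, the incomplete Gauss sum satisfies |∑_{x=1}^{N} e^{2πi a x²/m}| ≤ 5√(m·ln m). -/
/-!
Weyl differencing. Squaring `S = ∑ e(a x² / m)` and putting `x = y + h` turns `|S|²` into a sum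
over `|h| < N` of geometric sums in `y` with ratio `e(2ah / m)`. Such a sum is at most `N`, and at
most `1 / sin(π k / m) ≤ (m / 2) (1 / k + 1 / (m - k))` when `2ah ≡ k ≢ 0 (mod m)` with
`0 < k < m`. As `a` is invertible mod `m`, `h ↦ 2ah mod m` is at most two-to-one on any `m`
consecutive integers, so the sum over `h` is at most four times the sum of these bounds over all
residues `k`, i.e. `4 (N + m (1 + log m))` by the harmonic-sum estimate. This is `≤ 25 m log m`
as soon as `log m ≥ 1`.
-/

open Complex Finset
open scoped Real ComplexConjugate

noncomputable def e (t : ℝ) : ℂ := exp (2 * π * I * t)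

lemma e_eq_exp_I_mul (t : ℝ) : e t = exp (I * ↑(2 * π * t)) := by
  rw [e]; push_cast; ring_nf

lemma norm_e (t : ℝ) : ‖e t‖ = 1 := by
  rw [e_eq_exp_I_mul, mul_comm]; exact norm_exp_ofReal_mul_I _

lemma e_add (s t : ℝ) : e (s + t) = e s * e t := by
  simp only [e, ← exp_add]; push_cast; ring_nf

lemma e_zpow (t : ℝ) (n : ℤ) : e t ^ n = e (n * t) := by
  rw [e, ← exp_int_mul, e]; push_cast; ring_nf

lemma e_intCast (n : ℤ) : e n = 1 :=
  exp_eq_one_iff.mpr ⟨n, by push_cast; ring⟩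

lemma conj_e (t : ℝ) : conj (e t) = e (-t) := by
  rw [e, ← exp_conj, e, map_mul, map_mul, map_mul, conj_I, conj_ofReal, conj_ofReal, map_ofNat]
  push_cast; ring_nf

lemma e_div_emod (x m : ℤ) : e (x / m) = e ((x % m : ℤ) / m) := by
  rcases eq_or_ne m 0 with rfl | hm
  · simp
  · conv_lhs => rw [← Int.emod_add_mul_ediv x m]
    rw [Int.cast_add, Int.cast_mul, add_div, mul_div_cancel_left₀ _ (by exact_mod_cast hm),
      e_add, e_intCast, mul_one]

lemma norm_e_sub_one (t : ℝ) : ‖e t - 1‖ = 2 * |Real.sin (π * t)| := by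
  rw [e_eq_exp_I_mul, norm_exp_I_mul_ofReal_sub_one, norm_mul, Real.norm_eq_abs,
    Real.norm_eq_abs, abs_two]
  ring_nf

lemma norm_sum_Icc_zpow_le {z : ℂ} (hz : ‖z‖ = 1) (hz1 : z ≠ 1) (u v : ℤ) :
    ‖∑ y ∈ Icc u v, z ^ y‖ ≤ 2 / ‖z - 1‖ := by
  have hz0 : z ≠ 0 := by rintro rfl; simp at hz
  have hshift : ∑ y ∈ Icc u v, z ^ y = z ^ u * ∑ j ∈ range (v + 1 - u).toNat, z ^ j := by
    rw [Int.Icc_eq_finset_map, sum_map, mul_sum]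
    refine sum_congr rfl fun j _ => ?_
    simp [zpow_add₀ hz0]
  rw [hshift, geom_sum_eq hz1, norm_mul, norm_zpow, hz, one_zpow, one_mul, norm_div]
  gcongr
  calc ‖z ^ _ - 1‖ ≤ ‖z ^ _‖ + ‖(1 : ℂ)‖ := norm_sub_le _ _
    _ = 2 := by rw [norm_pow, hz, one_pow, norm_one]; norm_num

lemma norm_sum_Icc_e_zpow_le {t : ℝ} (ht : Real.sin (π * t) ≠ 0) (u v : ℤ) :
    ‖∑ y ∈ Icc u v, e t ^ y‖ ≤ 1 / |Real.sin (π * t)| := by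
  have hnorm := norm_e_sub_one t
  have hne : e t ≠ 1 := fun h => by simp [h, ht] at hnorm
  calc _ ≤ 2 / ‖e t - 1‖ := norm_sum_Icc_zpow_le (norm_e t) hne u v
    _ = 1 / |Real.sin (π * t)| := by rw [hnorm]; field_simp

lemma two_mul_mul_one_sub_le_sin_pi_mul {x : ℝ} (h0 : 0 ≤ x) (h1 : x ≤ 1) :
    2 * x * (1 - x) ≤ Real.sin (π * x) := by
  rcases le_total x (1 / 2) with hx | hx
  · have := Real.mul_le_sin (x := π * x) (by positivity) (by nlinarith [Real.pi_pos])
    calc 2 * x * (1 - x) ≤ 2 * x := by nlinarith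
      _ = 2 / π * (π * x) := by field_simp
      _ ≤ _ := this
  · have := Real.mul_le_sin (x := π * (1 - x)) (by nlinarith [Real.pi_pos])
      (by nlinarith [Real.pi_pos])
    rw [mul_one_sub, Real.sin_pi_sub] at this
    calc 2 * x * (1 - x) ≤ 2 * (1 - x) := by nlinarith
      _ = 2 / π * (π - π * x) := by field_simp
      _ ≤ _ := this

lemma one_div_sin_pi_mul_div_le {k m : ℝ} (hk : 0 < k) (hkm : k < m) :
    1 / Real.sin (π * (k / m)) ≤ m / 2 * (1 / k + 1 / (m - k)) := by
  have hm : 0 < m := hk.trans hkm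
  have hpos : 0 < 2 * (k / m) * (1 - k / m) := by
    have : k / m < 1 := (div_lt_one hm).mpr hkm
    have : 0 < k / m := by positivity
    nlinarith
  calc 1 / Real.sin (π * (k / m)) ≤ 1 / (2 * (k / m) * (1 - k / m)) :=
        one_div_le_one_div_of_le hpos
          (two_mul_mul_one_sub_le_sin_pi_mul (by positivity) ((div_le_one hm).mpr hkm.le))
    _ = m / 2 * (1 / k + 1 / (m - k)) := by
        have : m - k ≠ 0 := by linarith
        field_simp
        ring

noncomputable def geomSumBound (m N : ℕ) (k : ℤ) : ℝ :=
  if k = 0 then N else m / 2 * (1 / k + 1 / (m - k))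

lemma geomSumBound_nonneg {m N : ℕ} {k : ℤ} (hk : k ∈ Ico (0 : ℤ) m) :
    0 ≤ geomSumBound m N k := by
  rw [mem_Ico] at hk
  have hk' : (k : ℝ) < m := by exact_mod_cast hk.2
  unfold geomSumBound
  split_ifs with h0
  · positivity
  · have : (0 : ℝ) < k := by exact_mod_cast lt_of_le_of_ne hk.1 (Ne.symm h0)
    have : (0 : ℝ) < m - k := by linarith
    positivity

lemma norm_sum_Icc_e_div_zpow_le {m : ℕ} (hm : 0 < m) (N : ℕ) (x u v : ℤ)
    (hN : v + 1 - u ≤ N) :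
    ‖∑ y ∈ Icc u v, e (x / m) ^ y‖ ≤ geomSumBound m N (x % m) := by
  have hmZ : (0 : ℤ) < m := by exact_mod_cast hm
  have hred : e (x / m) = e ((x % m : ℤ) / m) := by exact_mod_cast e_div_emod x m
  rw [hred, geomSumBound]
  split_ifs with hk
  · calc _ ≤ ∑ y ∈ Icc u v, ‖e ((x % m : ℤ) / m) ^ y‖ := norm_sum_le _ _
      _ = (v + 1 - u).toNat := by simp [norm_zpow, norm_e]
      _ ≤ N := by exact_mod_cast (by omega : (v + 1 - u).toNat ≤ N)
  · have hk0 : (0 : ℝ) < (x % m : ℤ) := by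
      exact_mod_cast lt_of_le_of_ne (Int.emod_nonneg x hmZ.ne') (Ne.symm hk)
    have hkm : ((x % m : ℤ) : ℝ) < m := by exact_mod_cast Int.emod_lt_of_pos x hmZ
    have hsin : 0 < Real.sin (π * ((x % m : ℤ) / m)) :=
      Real.sin_pos_of_pos_of_lt_pi (by positivity)
        (by rw [mul_lt_iff_lt_one_right Real.pi_pos, div_lt_one (hk0.trans hkm)]; exact hkm)
    calc _ ≤ 1 / |Real.sin (π * ((x % m : ℤ) / m))| := norm_sum_Icc_e_zpow_le hsin.ne' u v
      _ ≤ _ := by rw [abs_of_pos hsin]; exact one_div_sin_pi_mul_div_le hk0 hkm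

lemma norm_sum_Icc_sq_le (f : ℤ → ℂ) (N : ℤ) :
    ‖∑ x ∈ Icc 1 N, f x‖ ^ 2 ≤ ∑ h ∈ Icc (1 - N) (N - 1),
      ‖∑ y ∈ Icc (max 1 (1 - h)) (min N (N - h)), f (y + h) * conj (f y)‖ := by
  have hdiag : ∑ x ∈ Icc 1 N, ∑ y ∈ Icc 1 N, f x * conj (f y)
      = ∑ h ∈ Icc (1 - N) (N - 1),
          ∑ y ∈ Icc (max 1 (1 - h)) (min N (N - h)), f (y + h) * conj (f y) := by
    rw [← sum_product', sum_sigma']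
    refine sum_nbij' (fun p => ⟨p.1 - p.2, p.2⟩) (fun q => (q.2 + q.1, q.2)) ?_ ?_ ?_ ?_ ?_
    · rintro ⟨x, y⟩ hp
      simp only [mem_product, mem_Icc, mem_sigma] at hp ⊢
      omega
    · rintro ⟨h, y⟩ hq
      simp only [mem_product, mem_Icc, mem_sigma] at hq ⊢
      omega
    · rintro ⟨x, y⟩ -
      simp
    · rintro ⟨h, y⟩ -
      simp
    · rintro ⟨x, y⟩ -
      simp
  calc ‖∑ x ∈ Icc 1 N, f x‖ ^ 2
        = ‖(∑ x ∈ Icc 1 N, f x) * conj (∑ y ∈ Icc 1 N, f y)‖ := by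
        rw [norm_mul, RCLike.norm_conj, sq]
    _ = ‖∑ h ∈ Icc (1 - N) (N - 1),
          ∑ y ∈ Icc (max 1 (1 - h)) (min N (N - h)), f (y + h) * conj (f y)‖ := by
        rw [map_sum, sum_mul_sum, hdiag]
    _ ≤ _ := norm_sum_le _ _

lemma norm_sum_Icc_e_quadratic_sq_le {m : ℕ} (hm : 0 < m) (N : ℕ) (a : ℤ) :
    ‖∑ x ∈ Icc (1 : ℤ) N, e (a * x ^ 2 / m)‖ ^ 2
      ≤ ∑ h ∈ Icc (1 - N : ℤ) (N - 1), geomSumBound m N (2 * a * h % m) := by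
  refine (norm_sum_Icc_sq_le _ _).trans (sum_le_sum fun h _ => ?_)
  have hdiff : ∀ y : ℤ, e (a * ↑(y + h) ^ 2 / m) * conj (e (a * y ^ 2 / m))
      = e (a * h ^ 2 / m) * e ((2 * a * h : ℤ) / m) ^ y := by
    intro y
    rw [conj_e, ← e_add, e_zpow, ← e_add]
    congr 1
    push_cast
    ring
  simp_rw [hdiff, ← mul_sum, norm_mul, norm_e, one_mul]
  exact norm_sum_Icc_e_div_zpow_le hm N _ _ _ (by omega)

lemma two_mul_sub_eq_or_of_emod_eq {m a u v : ℤ} (ha : IsCoprime a m)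
    (huv : u ≠ v) (hlt : |u - v| < m) (heq : 2 * a * u % m = 2 * a * v % m) :
    2 * (u - v) = m ∨ 2 * (u - v) = -m := by
  have hdvd : m ∣ a * (2 * (u - v)) := by
    have := Int.ModEq.dvd heq.symm
    convert this using 1
    ring
  obtain ⟨c, hc⟩ := ha.symm.dvd_of_dvd_mul_left hdvd
  rw [abs_lt] at hlt
  have hc1 : c < 2 := by nlinarith
  have hc2 : -2 < c := by nlinarith
  interval_cases c <;> omega

lemma card_filter_two_mul_emod_eq_le_two {m a u : ℤ} (ha : IsCoprime a m) {s : Finset ℤ}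
    (hs : ∀ h ∈ s, u ≤ h ∧ h < u + m) (k : ℤ) :
    #{h ∈ s | 2 * a * h % m = k} ≤ 2 := by
  by_contra! hcard
  obtain ⟨h₁, h₂, h₃, hh₁, hh₂, hh₃, h12, h13, h23⟩ := two_lt_card_iff.mp hcard
  simp only [mem_filter] at hh₁ hh₂ hh₃
  have hclose : ∀ {x y}, x ∈ s → y ∈ s → |x - y| < m := fun hx hy => by
    have := hs _ hx; have := hs _ hy; rw [abs_lt]; omega
  have e12 := two_mul_sub_eq_or_of_emod_eq ha h12 (hclose hh₁.1 hh₂.1) (hh₁.2.trans hh₂.2.symm)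
  have e13 := two_mul_sub_eq_or_of_emod_eq ha h13 (hclose hh₁.1 hh₃.1) (hh₁.2.trans hh₃.2.symm)
  have e23 := two_mul_sub_eq_or_of_emod_eq ha h23 (hclose hh₂.1 hh₃.1) (hh₂.2.trans hh₃.2.symm)
  omega

lemma sum_comp_two_mul_emod_le {m a u : ℤ} (hm : 0 < m) (ha : IsCoprime a m) {b : ℤ → ℝ}
    (hb : ∀ k ∈ Ico 0 m, 0 ≤ b k) {s : Finset ℤ} (hs : ∀ h ∈ s, u ≤ h ∧ h < u + m) :
    ∑ h ∈ s, b (2 * a * h % m) ≤ 2 * ∑ k ∈ Ico 0 m, b k := by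
  have hmaps : s.image (fun h => 2 * a * h % m) ⊆ Ico 0 m := by
    intro k hk
    obtain ⟨h, -, rfl⟩ := mem_image.mp hk
    exact mem_Ico.mpr ⟨Int.emod_nonneg _ hm.ne', Int.emod_lt_of_pos _ hm⟩
  rw [sum_comp, mul_sum]
  calc ∑ k ∈ s.image _, #{h ∈ s | 2 * a * h % m = k} • b k
      ≤ ∑ k ∈ s.image (fun h => 2 * a * h % m), 2 * b k := by
        refine sum_le_sum fun k hk => ?_
        rw [nsmul_eq_mul]
        gcongr
        · exact hb k (hmaps hk)
        · exact_mod_cast card_filter_two_mul_emod_eq_le_two ha hs k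
    _ ≤ ∑ k ∈ Ico 0 m, 2 * b k :=
        sum_le_sum_of_subset_of_nonneg hmaps fun k hk _ => mul_nonneg zero_le_two (hb k hk)

lemma sum_Icc_comp_two_mul_emod_le {m a N : ℤ} (hm : 0 < m) (ha : IsCoprime a m) (hN : N ≤ m)
    {b : ℤ → ℝ} (hb : ∀ k ∈ Ico 0 m, 0 ≤ b k) :
    ∑ h ∈ Icc (1 - N) (N - 1), b (2 * a * h % m) ≤ 4 * ∑ k ∈ Ico 0 m, b k := by
  rw [← sum_filter_add_sum_filter_not _ (· < 1 - N + m)]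
  have hlow := sum_comp_two_mul_emod_le hm ha hb (u := 1 - N)
    (s := {h ∈ Icc (1 - N) (N - 1) | h < 1 - N + m}) fun h hh => by
      simp only [mem_filter, mem_Icc] at hh; omega
  have hhigh := sum_comp_two_mul_emod_le hm ha hb (u := 1 - N + m)
    (s := {h ∈ Icc (1 - N) (N - 1) | ¬h < 1 - N + m}) fun h hh => by
      simp only [mem_filter, mem_Icc] at hh; omega
  linarith

lemma sum_Ico_one_div_le_one_add_log (m : ℕ) :
    ∑ k ∈ Ico (1 : ℤ) m, 1 / (k : ℝ) ≤ 1 + Real.log m := by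
  calc ∑ k ∈ Ico (1 : ℤ) m, 1 / (k : ℝ) = ∑ j ∈ range (m - 1), ((j + 1 : ℕ) : ℝ)⁻¹ := by
        rw [Int.Ico_eq_finset_map, sum_map, show ((m : ℤ) - 1).toNat = m - 1 by omega]
        refine sum_congr rfl fun j _ => ?_
        simp [add_comm]
    _ ≤ ∑ j ∈ range m, ((j + 1 : ℕ) : ℝ)⁻¹ :=
        sum_le_sum_of_subset_of_nonneg (range_subset_range.mpr (Nat.sub_le m 1))
          fun _ _ _ => by positivity
    _ = harmonic m := by simp [harmonic]
    _ ≤ 1 + Real.log m := harmonic_le_one_add_log m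

lemma sum_Ico_geomSumBound_le {m : ℕ} (hm : 0 < m) (N : ℕ) :
    ∑ k ∈ Ico (0 : ℤ) m, geomSumBound m N k ≤ N + m * (1 + Real.log m) := by
  have hsplit : Ico (0 : ℤ) m = insert 0 (Ico (1 : ℤ) m) := by
    ext k; simp only [mem_Ico, mem_insert]; omega
  have hreflect :
      ∑ k ∈ Ico (1 : ℤ) m, 1 / ((m : ℝ) - k) = ∑ k ∈ Ico (1 : ℤ) m, 1 / (k : ℝ) := by
    refine sum_nbij' (fun k => m - k) (fun k => m - k) ?_ ?_ ?_ ?_ ?_ <;>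
      intro k hk <;> simp only [mem_Ico] at hk ⊢ <;> try omega
    push_cast; ring_nf
  have hpos : ∑ k ∈ Ico (1 : ℤ) m, geomSumBound m N k
      = m / 2 * ∑ k ∈ Ico (1 : ℤ) m, (1 / (k : ℝ) + 1 / (m - k)) := by
    rw [mul_sum]
    refine sum_congr rfl fun k hk => ?_
    rw [geomSumBound, if_neg (by simp only [mem_Ico] at hk; omega)]
  rw [hsplit, sum_insert (by simp), hpos, sum_add_distrib, hreflect, geomSumBound, if_pos rfl]
  have := sum_Ico_one_div_le_one_add_log m
  have : (0 : ℝ) < m := by exact_mod_cast hm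
  nlinarith

open Complex in
theorem stmt_3 :
    ∃ m₀ : ℕ, ∀ m : ℕ, m₀ < m → ∀ a : ℤ, Int.gcd a m = 1 →
      ∀ N : ℕ, 1 ≤ N → N ≤ m →
        ‖(∑ x ∈ Finset.Icc 1 N,
            Complex.exp (2 * Real.pi * Complex.I * a * (x : ℂ) ^ 2 / m))‖
          ≤ 5 * Real.sqrt (m * Real.log m) := by
  refine ⟨2, fun m hm a ha N _ hNm => ?_⟩
  have hm0 : 0 < m := by omega
  have hlog : 1 ≤ Real.log m := by
    rw [Real.le_log_iff_exp_le (by positivity)]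
    have : (3 : ℝ) ≤ m := by exact_mod_cast (hm : 3 ≤ m)
    linarith [Real.exp_one_lt_d9]
  have hcast : ∑ x ∈ Icc 1 N, exp (2 * π * I * a * (x : ℂ) ^ 2 / m)
      = ∑ x ∈ Icc (1 : ℤ) N, e (a * x ^ 2 / m) := by
    rw [show Icc (1 : ℤ) N = (Icc 1 N).map Nat.castEmbedding by
      ext x; simp only [mem_map, mem_Icc, Nat.castEmbedding_apply]
      exact ⟨fun hx => ⟨x.toNat, by omega, by omega⟩, fun ⟨y, hy, hyx⟩ => by omega⟩, sum_map]
    refine sum_congr rfl fun x _ => ?_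
    simp only [e, Nat.castEmbedding_apply]
    push_cast
    ring_nf
  have hsq : ‖∑ x ∈ Icc (1 : ℤ) N, e (a * x ^ 2 / m)‖ ^ 2 ≤ (5 * √(m * Real.log m)) ^ 2 :=
    calc _ ≤ ∑ h ∈ Icc (1 - N : ℤ) (N - 1), geomSumBound m N (2 * a * h % m) :=
          norm_sum_Icc_e_quadratic_sq_le hm0 N a
      _ ≤ 4 * ∑ k ∈ Ico (0 : ℤ) m, geomSumBound m N k :=
          sum_Icc_comp_two_mul_emod_le (by omega) (Int.isCoprime_iff_gcd_eq_one.mpr ha)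
            (by omega) (fun k hk => geomSumBound_nonneg hk)
      _ ≤ 4 * (N + m * (1 + Real.log m)) := by gcongr; exact sum_Ico_geomSumBound_le hm0 N
      _ ≤ (5 * √(m * Real.log m)) ^ 2 := by
          rw [mul_pow, Real.sq_sqrt (by positivity)]
          have : (N : ℝ) ≤ m := by exact_mod_cast hNm
          nlinarith
  rw [hcast]
  exact (pow_le_pow_iff_left₀ (norm_nonneg _) (by positivity) two_ne_zero).mp hsq
end
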